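/- For a class whose firing space is given by a consistent normalized DBM D̃ over Te(M) ∪ {•}, an activated transition t_f is firable if and only if β̃[t_f] ≥ 0, where β̃[t_f] = min over activated t of D̃[t_f, t]. -/

import Mathlib

/-!
Call `p : Option V → WithTop ℚ` a potential of `D` if `p y ≤ p x + D x y` for all `x, y`; an
everywhere finite potential is a solution up to an additive constant. Potentials are closed under
pointwise `min`, and both the shifted rows `c + D[a, ·]` (by the triangle inequality) and the
solutions are potentials. Given a solution `ψ₀` and `c ≤ ψ₀` on `Ta`, the potential
`min (c + D[t_f, ·]) ψ₀` is at most `c` at `t_f` because `D[t_f, t_f] = 0`, and at least `c` on `Ta`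
when every `D[t_f, t]` is nonnegative there, so it yields a solution in which `t_f` fires first.
-/

def dbmSol {V : Type*} (D : Option V → Option V → WithTop ℚ) : Set (V → ℚ) :=
  {ψ | ∀ x y : Option V, ((y.elim 0 ψ - x.elim 0 ψ : ℚ) : WithTop ℚ) ≤ D x y}

theorem WithTop.coe_sub_le_iff {α : Type*} [AddCommGroup α] [LinearOrder α]
    [IsOrderedAddMonoid α] {a b : α} {z : WithTop α} :
    ((b - a : α) : WithTop α) ≤ z ↔ (b : WithTop α) ≤ a + z := by
  cases z with
  | top => simp
  | coe c => exact_mod_cast sub_le_iff_le_add'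

section Potential

variable {V : Type*} {D : Option V → Option V → WithTop ℚ}

def IsPotential (D : Option V → Option V → WithTop ℚ) (p : Option V → WithTop ℚ) : Prop :=
  ∀ x y, p y ≤ p x + D x y

theorem mem_dbmSol_iff_isPotential {ψ : V → ℚ} :
    ψ ∈ dbmSol D ↔ IsPotential D (fun x => ((x.elim 0 ψ : ℚ) : WithTop ℚ)) := by
  simp only [dbmSol, IsPotential, Set.mem_ofPred_eq, WithTop.coe_sub_le_iff]

theorem isPotential_const_add_row (htri : ∀ x y z, D x z ≤ D x y + D y z)
    (a : Option V) (c : WithTop ℚ) : IsPotential D (fun x => c + D a x) := fun x y => by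
  dsimp only
  rw [add_assoc]
  gcongr
  exact htri a x y

theorem IsPotential.min {p q : Option V → WithTop ℚ} (hp : IsPotential D p)
    (hq : IsPotential D q) : IsPotential D (fun x => min (p x) (q x)) := fun x y => by
  dsimp only
  rw [← min_add_add_right]
  exact min_le_min (hp x y) (hq x y)

theorem IsPotential.exists_mem_dbmSol {p : Option V → WithTop ℚ} (hp : IsPotential D p)
    (hfin : ∀ x, p x ≠ ⊤) :
    ∃ φ ∈ dbmSol D, ∃ k : ℚ, ∀ x, p x = ((x.elim 0 φ + k : ℚ) : WithTop ℚ) := by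
  lift p to Option V → ℚ using hfin
  set φ : V → ℚ := fun t => p (some t) - p none
  have hφ : ∀ x, x.elim 0 φ = p x - p none := by
    rintro (_ | t) <;> simp [φ]
  refine ⟨φ, fun x y => ?_, p none, fun x => by rw [hφ, sub_add_cancel]⟩
  rw [hφ, hφ, sub_sub_sub_cancel_right, WithTop.coe_sub_le_iff]
  exact hp x y

end Potential

theorem dbm_firable_iff_beta_nonneg_general {T : Type*}
    (D : Option T → Option T → WithTop ℚ) (Ta : Finset T) (tf : T)
    (htf : tf ∈ Ta)
    (hcons : (dbmSol D).Nonempty)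
    (hdiag : ∀ x : Option T, D x x = 0)
    (htri : ∀ x y z : Option T, D x z ≤ D x y + D y z) :
    (∃ ψ ∈ dbmSol D, ∀ t ∈ Ta, ψ tf ≤ ψ t) ↔
      0 ≤ Ta.inf' ⟨tf, htf⟩ (fun t => D (some tf) (some t)) := by
  constructor
  · rintro ⟨ψ, hψ, hfirst⟩
    refine Finset.le_inf' _ _ fun t ht => le_trans ?_ (hψ (some tf) (some t))
    exact WithTop.coe_nonneg.mpr (sub_nonneg.mpr (hfirst t ht))
  · intro hβ
    obtain ⟨ψ₀, hψ₀⟩ := hcons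
    set c := Ta.inf' ⟨tf, htf⟩ ψ₀
    set p : Option T → WithTop ℚ := fun x => min (c + D (some tf) x) (x.elim 0 ψ₀ : ℚ)
    have hp : IsPotential D p :=
      (isPotential_const_add_row htri _ _).min (mem_dbmSol_iff_isPotential.mp hψ₀)
    obtain ⟨φ, hφ, k, hk⟩ :=
      hp.exists_mem_dbmSol fun x => (min_lt_of_right_lt (WithTop.coe_lt_top _)).ne
    have hp_tf : p (some tf) ≤ c := min_le_of_left_le (by rw [hdiag, add_zero])
    have hp_Ta : ∀ t ∈ Ta, (c : WithTop ℚ) ≤ p (some t) := fun t ht =>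
      le_min (le_add_of_nonneg_right (hβ.trans (Finset.inf'_le _ ht)))
        (WithTop.coe_le_coe.mpr (Finset.inf'_le _ ht))
    refine ⟨φ, hφ, fun t ht => ?_⟩
    have h := hp_tf.trans (hp_Ta t ht)
    rw [hk, hk, WithTop.coe_le_coe] at h
    exact le_of_add_le_add_right h

/-- for a class given by a consistent normalized tight DBM, an
activated transition `t_f` is firable iff `β̃[t_f] = min_{t ∈ Ta} D̃[t_f,t] ≥ 0`. -/
theorem dbm_firable_iff_beta_nonneg {T : Type*} [Fintype T] [DecidableEq T]
    (D : Option T → Option T → WithTop ℚ) (Ta : Finset T) (tf : T)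
    (htf : tf ∈ Ta)
    (hcons : (dbmSol D).Nonempty)
    (hdiag : ∀ x : Option T, D x x = 0)
    (htri : ∀ x y z : Option T, D x z ≤ D x y + D y z)
    (htight : ∀ (x y : Option T) (q : ℚ), D x y = (q : WithTop ℚ) →
      ∃ ψ ∈ dbmSol D, (y.elim 0 ψ - x.elim 0 ψ : ℚ) = q)
    (hnn : ∀ ψ ∈ dbmSol D, ∀ t : T, 0 ≤ ψ t) :
    (∃ ψ ∈ dbmSol D, ∀ t ∈ Ta, ψ tf ≤ ψ t) ↔
      0 ≤ Ta.inf' ⟨tf, htf⟩ (fun t => D (some tf) (some t)) :=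
  dbm_firable_iff_beta_nonneg_general D Ta tf htf hcons hdiag htri
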